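/- Let (Ω, 𝒜, μ) be a measure space. Let σ, w, h : Ω → ℝ be measurable and essentially bounded, let G, P, Q ∈ L²(μ; ℝ^N), and let S ⊆ L²(μ; ℝ^N) be a set of square-integrable vector fields with P ∈ S and Q ∈ S. Assume the two variational identities: (i) for all v ∈ S, ∫_Ω σ ⟨P, v⟩ dμ = − ∫_Ω σ w ⟨G, v⟩ dμ, and (ii) for all v ∈ S, ∫_Ω σ ⟨Q, v⟩ dμ = − ∫_Ω h ⟨G, v⟩ dμ. Then ∫_Ω ( h‖G‖² + 2σ⟨G, Q⟩ ) · w dμ = ∫_Ω h · ( w‖G‖² + 2⟨G, P⟩ ) dμ. -/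

import Mathlib

open MeasureTheory
open scoped ENNReal RealInnerProductSpace

theorem MeasureTheory.MemLp.integrable_inner {α 𝕜 E : Type*} [MeasurableSpace α] {μ : Measure α}
    [RCLike 𝕜] [NormedAddCommGroup E] [InnerProductSpace 𝕜 E] {f g : α → E}
    (hf : MemLp f 2 μ) (hg : MemLp g 2 μ) :
    Integrable (fun x => inner 𝕜 (f x) (g x)) μ :=
  (L2.integrable_inner (hf.toLp f) (hg.toLp g)).congr <| by
    filter_upwards [hf.coeFn_toLp, hg.coeFn_toLp] with x hfx hgx
    rw [hfx, hgx]

theorem adjoint_derivative_central_identity_general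
    {Ω : Type*} [MeasurableSpace Ω] (μ : Measure Ω) (N : ℕ)
    (σ w h : Ω → ℝ)
    (hσ : MemLp σ ∞ μ)
    (hw : MemLp w ∞ μ)
    (hh : MemLp h ∞ μ)
    (G P Q : Ω → EuclideanSpace ℝ (Fin N))
    (hG : MemLp G 2 μ) (hP : MemLp P 2 μ) (hQ : MemLp Q 2 μ)
    (S : Set (Ω → EuclideanSpace ℝ (Fin N)))
    (hPS : P ∈ S) (hQS : Q ∈ S)
    (hvarP : ∀ v ∈ S, ∫ x, σ x * ⟪P x, v x⟫ ∂μ = -∫ x, σ x * w x * ⟪G x, v x⟫ ∂μ)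
    (hvarQ : ∀ v ∈ S, ∫ x, σ x * ⟪Q x, v x⟫ ∂μ = -∫ x, h x * ⟪G x, v x⟫ ∂μ) :
    ∫ x, (h x * ‖G x‖ ^ 2 + 2 * σ x * ⟪G x, Q x⟫) * w x ∂μ =
      ∫ x, h x * (w x * ‖G x‖ ^ 2 + 2 * ⟪G x, P x⟫) ∂μ := by
  -- Testing (i) with `Q` and (ii) with `P` compares both sides with the symmetric pairing `∫ σ⟪P, Q⟫`.
  have key : ∫ x, σ x * w x * ⟪G x, Q x⟫ ∂μ = ∫ x, h x * ⟪G x, P x⟫ ∂μ := by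
    have hsymm : ∫ x, σ x * ⟪P x, Q x⟫ ∂μ = ∫ x, σ x * ⟪Q x, P x⟫ ∂μ := by
      simp_rw [real_inner_comm (P _)]
    linarith [hvarP Q hQS, hvarQ P hPS]
  have hGG : Integrable (fun x => h x * ‖G x‖ ^ 2 * w x) μ :=
    (hG.norm.integrable_sq.mul_of_top_right hh).mul_of_top_left hw
  have hGQ : Integrable (fun x => σ x * w x * ⟪G x, Q x⟫) μ :=
    (hG.integrable_inner hQ).mul_of_top_right (hw.mul hσ)
  have hGP : Integrable (fun x => h x * ⟪G x, P x⟫) μ :=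
    (hG.integrable_inner hP).mul_of_top_right hh
  calc ∫ x, (h x * ‖G x‖ ^ 2 + 2 * σ x * ⟪G x, Q x⟫) * w x ∂μ
      = ∫ x, h x * ‖G x‖ ^ 2 * w x ∂μ + 2 * ∫ x, σ x * w x * ⟪G x, Q x⟫ ∂μ := by
        rw [← integral_const_mul, ← integral_add hGG (hGQ.const_mul 2)]
        congr 1 with x; ring
    _ = ∫ x, h x * ‖G x‖ ^ 2 * w x ∂μ + 2 * ∫ x, h x * ⟪G x, P x⟫ ∂μ := by rw [key]
    _ = ∫ x, h x * (w x * ‖G x‖ ^ 2 + 2 * ⟪G x, P x⟫) ∂μ := by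
        rw [← integral_const_mul, ← integral_add hGG (hGP.const_mul 2)]
        congr 1 with x; ring

/-- **The central identity for the adjoint of the Fréchet derivative.**
Given essentially bounded `σ, w, h`, square-integrable vector fields `G, P, Q` with
`P, Q` in a class `S` of square-integrable vector fields, and the two variational
identities (i) `∫ σ⟪P,v⟫ = −∫ σ w ⟪G,v⟫` and (ii) `∫ σ⟪Q,v⟫ = −∫ h ⟪G,v⟫` for all
`v ∈ S`, we have `∫ (h‖G‖² + 2σ⟪G,Q⟫) w dμ = ∫ h (w‖G‖² + 2⟪G,P⟫) dμ`. -/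
theorem adjoint_derivative_central_identity
    {Ω : Type*} [MeasurableSpace Ω] (μ : Measure Ω) (N : ℕ)
    (σ w h : Ω → ℝ)
    (hσmeas : Measurable σ) (hσ : MemLp σ ∞ μ)
    (hwmeas : Measurable w) (hw : MemLp w ∞ μ)
    (hhmeas : Measurable h) (hh : MemLp h ∞ μ)
    (G P Q : Ω → EuclideanSpace ℝ (Fin N))
    (hG : MemLp G 2 μ) (hP : MemLp P 2 μ) (hQ : MemLp Q 2 μ)
    (S : Set (Ω → EuclideanSpace ℝ (Fin N)))
    (hS : ∀ v ∈ S, MemLp v 2 μ) (hPS : P ∈ S) (hQS : Q ∈ S)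
    (hvarP : ∀ v ∈ S, ∫ x, σ x * ⟪P x, v x⟫ ∂μ = -∫ x, σ x * w x * ⟪G x, v x⟫ ∂μ)
    (hvarQ : ∀ v ∈ S, ∫ x, σ x * ⟪Q x, v x⟫ ∂μ = -∫ x, h x * ⟪G x, v x⟫ ∂μ) :
    ∫ x, (h x * ‖G x‖ ^ 2 + 2 * σ x * ⟪G x, Q x⟫) * w x ∂μ =
      ∫ x, h x * (w x * ‖G x‖ ^ 2 + 2 * ⟪G x, P x⟫) ∂μ :=
  adjoint_derivative_central_identity_general μ N σ w h hσ hw hh G P Q hG hP hQ S hPS hQS hvarP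
    hvarQ
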